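/- Let R be a right artinian ring. Every principal indecomposable right R-module is co-Kasch if and only if the Cartan matrix of R is diagonal. -/
import Mathlib

section Jac
variable {R : Type*} [Ring R]

/-- If `x` is in the Jacobson radical, `1 - x` has a left inverse. -/
lemma jac_left_inv {x : R} (hx : x ∈ Ideal.jacobson (⊥ : Ideal R)) :
    ∃ z : R, z * (1 - x) = 1 := by
  obtain ⟨z, hz⟩ := Ideal.mem_jacobson_iff.mp hx (-1)
  rw [Ideal.mem_bot, sub_eq_zero] at hz
  rw [mul_neg_one, neg_mul, neg_add_eq_sub] at hz
  exact ⟨z, by rw [mul_sub, mul_one, hz]⟩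

/-- In an artinian ring, the Jacobson radical is nil. -/
lemma jac_nil [IsArtinianRing R] {x : R} (hx : x ∈ Ideal.jacobson (⊥ : Ideal R)) :
    IsNilpotent x := by
  have hmono : ∀ n : ℕ, (Ideal.span {x ^ (n+1)} : Ideal R) ≤ Ideal.span {x ^ n} := by
    intro n
    rw [Ideal.span_le, Set.singleton_subset_iff]
    have : x ^ (n+1) = x • x ^ n := by rw [smul_eq_mul, ← pow_succ']
    rw [this]
    exact Submodule.smul_mem _ _ (Submodule.subset_span rfl)
  obtain ⟨n, hn⟩ := IsArtinian.monotone_stabilizes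
    (⟨fun n => OrderDual.toDual (Ideal.span {x ^ n}),
      monotone_nat_of_le_succ fun n => hmono n⟩ : ℕ →o (Ideal R)ᵒᵈ)
  have hx' : x ^ n ∈ Ideal.span {x ^ (n+1)} := by
    have h := hn (n+1) (Nat.le_succ n)
    simp only [OrderHom.coe_mk] at h
    have h' : Ideal.span {x ^ n} = Ideal.span {x ^ (n+1)} := congrArg OrderDual.ofDual h
    rw [← h']; exact Submodule.subset_span rfl
  obtain ⟨r, hr⟩ := Submodule.mem_span_singleton.mp hx'
  rw [smul_eq_mul] at hr
  have hrx : r * x ∈ Ideal.jacobson (⊥ : Ideal R) := by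
    have := Submodule.smul_mem (Ideal.jacobson (⊥ : Ideal R)) r hx
    rwa [smul_eq_mul] at this
  obtain ⟨z, hz⟩ := jac_left_inv hrx
  refine ⟨n, ?_⟩
  have : (1 - r * x) * x ^ n = 0 := by
    rw [sub_mul, one_mul, mul_assoc, ← pow_succ', hr, sub_self]
  calc x ^ n = (z * (1 - r * x)) * x ^ n := by rw [hz, one_mul]
    _ = z * ((1 - r * x) * x ^ n) := by rw [mul_assoc]
    _ = 0 := by rw [this, mul_zero]

end Jac

section PIM
variable {R : Type*} [Ring R] {e : R}

/-- Every element of the left ideal `Re` is fixed by right multiplication by `e`. -/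
lemma mul_e_eq (he : IsIdempotentElem e) {x : R} (hx : x ∈ Ideal.span {e}) :
    x * e = x := by
  have hx' : x ∈ Submodule.span R {e} := hx
  obtain ⟨r, hr⟩ := Submodule.mem_span_singleton.mp hx'
  rw [← hr, smul_eq_mul, mul_assoc, he.eq]

lemma e_mem_span : e ∈ Ideal.span {e} := Submodule.subset_span rfl

/-- If a submodule of `Re` contains `e`, it is everything. -/
lemma top_of_e_mem {U : Submodule R (Ideal.span {e} : Ideal R)}
    (hU : (⟨e, e_mem_span⟩ : (Ideal.span {e} : Ideal R)) ∈ U) : U = ⊤ := by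
  rw [eq_top_iff]
  rintro ⟨y, hy⟩ -
  obtain ⟨r, hr⟩ := Submodule.mem_span_singleton.mp hy
  have : (⟨y, hy⟩ : (Ideal.span {e} : Ideal R)) = r • ⟨e, e_mem_span⟩ := by
    apply Subtype.ext
    simpa using hr.symm
  rw [this]
  exact Submodule.smul_mem _ _ hU

/-- Every coatom of `Re` contains `J ∩ Re`. -/
lemma jac_le_coatom (he : IsIdempotentElem e)
    {T : Submodule R (Ideal.span {e} : Ideal R)} (hT : IsCoatom T) :
    Submodule.comap (Ideal.span {e} : Ideal R).subtype (Ideal.jacobson ⊥) ≤ T := by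
  intro x hx
  have hxJ : (x : R) ∈ Ideal.jacobson (⊥ : Ideal R) := hx
  by_contra hxT
  have hlt : T < T ⊔ Submodule.span R {x} := by
    refine lt_of_le_of_ne le_sup_left fun hEq => hxT ?_
    rw [hEq]
    exact Submodule.mem_sup_right (Submodule.subset_span rfl)
  have htop : T ⊔ Submodule.span R {x} = ⊤ := hT.2 _ hlt
  have hemem : (⟨e, e_mem_span⟩ : (Ideal.span {e} : Ideal R)) ∈ T ⊔ Submodule.span R {x} := by
    rw [htop]; trivial
  obtain ⟨t, ht, z, hz, hsum⟩ := Submodule.mem_sup.mp hemem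
  obtain ⟨r, hr⟩ := Submodule.mem_span_singleton.mp hz
  -- e = t + r • x  (as elements of R)
  have hzval : (z : R) = r * (x : R) := by rw [← hr]; rfl
  have hsum' : e = (t : R) + r * (x : R) := by
    have h := congrArg Subtype.val hsum
    simp only [Submodule.coe_add] at h
    rw [← hzval]
    exact h.symm
  have hj : r * (x : R) ∈ Ideal.jacobson (⊥ : Ideal R) := by
    have := Submodule.smul_mem (Ideal.jacobson (⊥ : Ideal R)) r hxJ
    rwa [smul_eq_mul] at this
  obtain ⟨z', hz'⟩ := jac_left_inv hj
  -- t = (1 - r x) e, hence e = z' • t ∈ T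
  have hte : (t : R) = (1 - r * (x : R)) * e := by
    rw [sub_mul, one_mul, mul_assoc, mul_e_eq he x.2, ← hzval]
    have h := congrArg Subtype.val hsum
    simp only [Submodule.coe_add] at h
    exact eq_sub_of_add_eq h
  have : (⟨e, e_mem_span⟩ : (Ideal.span {e} : Ideal R)) = z' • t := by
    apply Subtype.ext
    show e = z' * (t : R)
    rw [hte, ← mul_assoc, hz', one_mul]
  have : (⟨e, e_mem_span⟩ : (Ideal.span {e} : Ideal R)) ∈ T := this ▸ Submodule.smul_mem _ _ ht
  exact hT.1 (top_of_e_mem this)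

/-- For `x ∈ Re` not in the radical, there is a coatom avoiding it. -/
lemma exists_coatom_avoid {x : (Ideal.span {e} : Ideal R)}
    (hx : (x : R) ∉ Ideal.jacobson (⊥ : Ideal R)) :
    ∃ T : Submodule R (Ideal.span {e} : Ideal R), IsCoatom T ∧ x ∉ T := by
  have : ¬ ∀ m ∈ {J : Ideal R | ⊥ ≤ J ∧ J.IsMaximal}, (x : R) ∈ m := by
    intro h
    exact hx (Submodule.mem_sInf.mpr h)
  push_neg at this
  obtain ⟨m, ⟨-, hm⟩, hxm⟩ := this
  refine ⟨Submodule.comap (Ideal.span {e} : Ideal R).subtype m, ⟨?_, ?_⟩, hxm⟩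
  · intro hEq
    apply hxm
    have hx' : x ∈ (⊤ : Submodule R (Ideal.span {e} : Ideal R)) := trivial
    rw [← hEq] at hx'
    exact hx'
  · intro U hU
    obtain ⟨u, huU, hum⟩ : ∃ u, u ∈ U ∧ (u : R) ∉ m := by
      obtain ⟨u, hu1, hu2⟩ := SetLike.exists_of_lt hU
      exact ⟨u, hu1, hu2⟩
    have hm' : IsCoatom m := Ideal.isMaximal_def.mp hm
    have hlt : m < m ⊔ Ideal.span {(u : R)} := by
      refine lt_of_le_of_ne le_sup_left fun hEq => hum ?_
      rw [hEq]
      exact Submodule.mem_sup_right (Submodule.subset_span rfl)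
    have htop : m ⊔ Ideal.span {(u : R)} = ⊤ := hm'.2 _ hlt
    rw [eq_top_iff]
    rintro y -
    have hy : (y : R) ∈ m ⊔ Ideal.span {(u : R)} := by rw [htop]; trivial
    obtain ⟨a, ha, z, hz, hsum⟩ := Submodule.mem_sup.mp hy
    obtain ⟨r, hr⟩ := Submodule.mem_span_singleton.mp hz
    rw [smul_eq_mul] at hr
    have haM : a ∈ (Ideal.span {e} : Ideal R) := by
      have h : a = (y : R) - r * (u : R) := eq_sub_of_add_eq (by rw [hr]; exact hsum)
      rw [h]
      refine Submodule.sub_mem _ y.2 ?_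
      have := Submodule.smul_mem (Ideal.span {e} : Ideal R) r u.2
      rwa [smul_eq_mul] at this
    have hyeq : y = (⟨a, haM⟩ : (Ideal.span {e} : Ideal R)) + r • u := by
      apply Subtype.ext
      show (y : R) = a + r * (u : R)
      rw [hr]
      exact hsum.symm
    rw [hyeq]
    exact Submodule.add_mem _ (hU.le ha) (Submodule.smul_mem _ _ huU)
end PIM

section Quot
variable {R : Type*} [Ring R]

abbrev JQ (R : Type*) [Ring R] := ((⊥ : TwoSidedIdeal R).jacobson).ringCon.Quotient

noncomputable abbrev jmk (R : Type*) [Ring R] : R →+* JQ R := RingCon.mk' _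

lemma jmk_eq_zero_iff {x : R} : jmk R x = 0 ↔ x ∈ Ideal.jacobson (⊥ : Ideal R) := by
  have h0 : (0 : JQ R) = jmk R 0 := (map_zero _).symm
  rw [h0]
  show (x : JQ R) = ((0 : R) : JQ R) ↔ _
  rw [RingCon.eq]
  have : ((⊥ : TwoSidedIdeal R).jacobson).ringCon x 0 ↔ x ∈ (⊥ : TwoSidedIdeal R).jacobson :=
    (TwoSidedIdeal.mem_iff _ _).symm
  rw [this, TwoSidedIdeal.mem_jacobson_iff, Ideal.mem_jacobson_iff]
  simp [TwoSidedIdeal.mem_bot, Ideal.mem_bot]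

lemma jmk_surjective : Function.Surjective (jmk R) := fun q => Quotient.exists_rep q

end Quot

def IsCoKasch (R : Type*) [Ring R] (M : Type*) [AddCommGroup M] [Module R M] : Prop :=
  ∀ (K : Submodule R M) (S : Submodule R (M ⧸ K)), IsSimpleModule R S →
    ∃ f : M →ₗ[R] S, Function.Surjective f

/-- `e` is a primitive idempotent: a nonzero idempotent that is not the sum of two
nonzero orthogonal idempotents. -/
def IsPrimitiveIdempotent {R : Type*} [Ring R] (e : R) : Prop :=
  IsIdempotentElem e ∧ e ≠ 0 ∧
    ∀ a b : R, IsIdempotentElem a → IsIdempotentElem b → a * b = 0 → b * a = 0 →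
      e = a + b → a = 0 ∨ b = 0

section Main
variable {R : Type*} [Ring R]

/-- Any two coatoms of `Re` for a primitive idempotent `e` in an artinian ring coincide. -/
lemma coatom_unique [IsArtinianRing R] {e : R} (hprim : IsPrimitiveIdempotent e)
    {T₁ T₂ : Submodule R (Ideal.span {e} : Ideal R)} (h1 : IsCoatom T₁) (h2 : IsCoatom T₂) :
    T₁ = T₂ := by
  obtain ⟨he, hne, hp⟩ := hprim
  by_contra h12
  set Jm : Submodule R (Ideal.span {e} : Ideal R) :=
    Submodule.comap (Ideal.span {e} : Ideal R).subtype (Ideal.jacobson ⊥) with hJm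
  have hJT : ∀ {T : Submodule R (Ideal.span {e} : Ideal R)}, IsCoatom T → Jm ≤ T :=
    fun hT => jac_le_coatom he hT
  have hart : IsArtinian R (Ideal.span {e} : Ideal R) :=
    isArtinian_span_of_finite R (Set.finite_singleton e)
  -- find a minimal complement-candidate N
  obtain ⟨N, ⟨hJN, hNT⟩, hmin⟩ := IsArtinian.set_has_minimal
      {N : Submodule R (Ideal.span {e} : Ideal R) | Jm ≤ N ∧ N ⊔ T₁ = ⊤}
      ⟨⊤, le_top, top_sup_eq T₁⟩
  -- N ⊓ T₁ ≤ Jm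
  have hinf : N ⊓ T₁ ≤ Jm := by
    intro x hx
    by_contra hxJ
    obtain ⟨T', hT', hxT'⟩ := exists_coatom_avoid (x := x) hxJ
    set N' : Submodule R (Ideal.span {e} : Ideal R) := (N ⊓ T') ⊔ Jm with hN'
    have hN'S : Jm ≤ N' ∧ N' ⊔ T₁ = ⊤ := by
      refine ⟨le_sup_right, ?_⟩
      rw [eq_top_iff]
      rintro y -
      have hy : y ∈ N ⊔ T₁ := by rw [hNT]; trivial
      obtain ⟨n, hn, t, ht, hsum⟩ := Submodule.mem_sup.mp hy
      have hxsp : T' ⊔ Submodule.span R {x} = ⊤ := by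
        refine hT'.2 _ (lt_of_le_of_ne le_sup_left fun hEq => hxT' ?_)
        rw [hEq]; exact Submodule.mem_sup_right (Submodule.subset_span rfl)
      have hn' : n ∈ T' ⊔ Submodule.span R {x} := by rw [hxsp]; trivial
      obtain ⟨t'', ht'', z, hzs, hsum2⟩ := Submodule.mem_sup.mp hn'
      obtain ⟨r, hr⟩ := Submodule.mem_span_singleton.mp hzs
      have ht''N : t'' ∈ N := by
        have hsum2' := hsum2
        rw [← hr] at hsum2'
        have h : t'' = n - r • x := eq_sub_of_add_eq hsum2'
        rw [h]
        exact Submodule.sub_mem _ hn (Submodule.smul_mem _ _ (Submodule.mem_inf.mp hx).1)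
      have hyeq : y = t'' + (z + t) := by rw [← add_assoc, hsum2, hsum]
      rw [hyeq]
      refine Submodule.add_mem _ ?_ (Submodule.mem_sup_right ?_)
      · exact Submodule.mem_sup_left (Submodule.mem_sup_left (Submodule.mem_inf.mpr ⟨ht''N, ht''⟩))
      · refine Submodule.add_mem _ ?_ ht
        rw [← hr]
        exact Submodule.smul_mem _ _ (Submodule.mem_inf.mp hx).2
    refine hmin N' hN'S ?_
    refine lt_of_le_of_ne (sup_le (inf_le_left.trans le_rfl) hJN) fun hEq => ?_
    -- x ∈ N but x ∉ N' : contradiction with N' = N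
    have hxN' : x ∈ N' := by rw [hEq]; exact hx.1
    obtain ⟨p, hpmem, q, hq, hpq⟩ := Submodule.mem_sup.mp hxN'
    have : x ∈ T' := by
      rw [← hpq]
      exact Submodule.add_mem _ (Submodule.mem_inf.mp hpmem).2 (hJT hT' hq)
    exact hxT' this
  -- decompose e
  have hemem : (⟨e, e_mem_span⟩ : (Ideal.span {e} : Ideal R)) ∈ N ⊔ T₁ := by rw [hNT]; trivial
  obtain ⟨n, hn, t, ht, hsum⟩ := Submodule.mem_sup.mp hemem
  have hesum0 : True := trivial
  set u : R := (n : R) with hu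
  set v : R := (t : R) with hv
  have hesum : u + v = e := congrArg Subtype.val hsum
  -- ring relations modulo J
  have huv : u * v ∈ Ideal.jacobson (⊥ : Ideal R) := by
    have hmem : (u • t : (Ideal.span {e} : Ideal R)) ∈ N ⊓ T₁ := by
      refine Submodule.mem_inf.mpr ⟨?_, Submodule.smul_mem _ _ ht⟩
      have heq : (u • t : (Ideal.span {e} : Ideal R)) = n - u • n := by
        apply Subtype.ext
        show u * v = u - u * u
        have h' : u * (u + v) = u := by
          rw [hesum]
          exact mul_e_eq he n.2
        rw [mul_add] at h'
        rw [add_comm] at h'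
        exact eq_sub_of_add_eq h'
      rw [heq]
      exact Submodule.sub_mem _ hn (Submodule.smul_mem _ _ hn)
    exact hinf hmem
  have hvu : v * u ∈ Ideal.jacobson (⊥ : Ideal R) := by
    have hmem : (v • n : (Ideal.span {e} : Ideal R)) ∈ N ⊓ T₁ := by
      refine Submodule.mem_inf.mpr ⟨Submodule.smul_mem _ _ hn, ?_⟩
      have heq : (v • n : (Ideal.span {e} : Ideal R)) = t - v • t := by
        apply Subtype.ext
        show v * u = v - v * v
        have h' : v * (u + v) = v := by
          rw [hesum]
          exact mul_e_eq he t.2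
        rw [mul_add] at h'
        exact eq_sub_of_add_eq h'
      rw [heq]
      exact Submodule.sub_mem _ ht (Submodule.smul_mem _ _ ht)
    exact hinf hmem
  have hu2 : u - u * u ∈ Ideal.jacobson (⊥ : Ideal R) := by
    have h' : u * (u + v) = u := by rw [hesum]; exact mul_e_eq he n.2
    rw [mul_add, add_comm] at h'
    have h'' : u - u * u = u * v := (eq_sub_of_add_eq h').symm
    rw [h'']; exact huv
  have hv2 : v - v * v ∈ Ideal.jacobson (⊥ : Ideal R) := by
    have h' : v * (u + v) = v := by rw [hesum]; exact mul_e_eq he t.2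
    rw [mul_add] at h'
    have h'' : v - v * v = v * u := (eq_sub_of_add_eq h').symm
    rw [h'']; exact hvu
  -- u, v are not in J
  have hunJ : u ∉ Ideal.jacobson (⊥ : Ideal R) := by
    intro huJ
    have : (⟨e, e_mem_span⟩ : (Ideal.span {e} : Ideal R)) ∈ T₁ := by
      rw [← hsum]
      exact Submodule.add_mem _ (hJT h1 huJ) ht
    exact h1.1 (top_of_e_mem this)
  have hvnJ : v ∉ Ideal.jacobson (⊥ : Ideal R) := by
    intro hvJ
    have heN : (⟨e, e_mem_span⟩ : (Ideal.span {e} : Ideal R)) ∈ N := by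
      rw [← hsum]
      exact Submodule.add_mem _ hn (hJN hvJ)
    have hNtop : N = ⊤ := top_of_e_mem heN
    have hT1 : T₁ ≤ Jm := by
      intro w hw
      refine hinf (Submodule.mem_inf.mpr ⟨?_, hw⟩)
      rw [hNtop]; trivial
    have hT12 : T₁ ≤ T₂ := hT1.trans (hJT h2)
    rcases (lt_or_eq_of_le hT12) with hlt | hEq
    · exact h2.1 (h1.2 _ hlt)
    · exact h12 hEq
  -- pass to R / J and lift idempotents
  have hu2' : IsIdempotentElem (jmk R u) := by
    show jmk R u * jmk R u = jmk R u
    rw [← map_mul, ← sub_eq_zero, ← map_sub, jmk_eq_zero_iff]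
    rw [← neg_sub u (u * u)]
    exact Submodule.neg_mem _ hu2
  have h1e : IsIdempotentElem (1 - e) := he.one_sub
  have hc1 : jmk R u * jmk R (1 - e) = 0 := by
    rw [← map_mul, jmk_eq_zero_iff]
    have : u * (1 - e) = 0 := by
      rw [mul_sub, mul_one, mul_e_eq he n.2, sub_self]
    rw [this]
    exact Submodule.zero_mem _
  have hc2 : jmk R (1 - e) * jmk R u = 0 := by
    rw [← map_mul, jmk_eq_zero_iff]
    have : (1 - e) * u = (u - u * u) - v * u := by
      rw [← hesum]; noncomm_ring
    rw [this]
    exact Submodule.sub_mem _ hu2 hvu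
  have hnil : ∀ y ∈ RingHom.ker (jmk R), IsNilpotent y := by
    intro y hy
    exact jac_nil (jmk_eq_zero_iff.mp (RingHom.mem_ker.mp hy))
  obtain ⟨a, ha, hfa, hae, hea⟩ :=
    exists_isIdempotentElem_mul_eq_zero_of_ker_isNilpotent (jmk R) hnil
      (jmk R u) ⟨u, rfl⟩ hu2' (1 - e) h1e hc1 hc2
  -- a = ae = ea ; set b = e - a
  have haee : a * e = a := by
    have : a * (1 - e) = 0 := hae
    rw [mul_sub, mul_one, sub_eq_zero] at this
    exact this.symm
  have heaa : e * a = a := by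
    have : (1 - e) * a = 0 := hea
    rw [sub_mul, one_mul, sub_eq_zero] at this
    exact this.symm
  set b : R := e - a with hb
  have hbidem : IsIdempotentElem b := by
    show (e - a) * (e - a) = e - a
    have hx : (e - a) * (e - a) = e * e - e * a - (a * e - a * a) := by noncomm_ring
    rw [hx, he.eq, heaa, haee, ha.eq]
    abel
  have hab : a * b = 0 := by rw [hb, mul_sub, haee, ha.eq, sub_self]
  have hba : b * a = 0 := by rw [hb, sub_mul, heaa, ha.eq, sub_self]
  have heab : e = a + b := by rw [hb]; abel
  rcases hp a b ha hbidem hab hba heab with h0 | h0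
  · -- a = 0 ⟹ u ∈ J
    apply hunJ
    rw [← jmk_eq_zero_iff, ← hfa, h0, map_zero]
  · -- b = 0 ⟹ a = e ⟹ v ∈ J
    apply hvnJ
    rw [← jmk_eq_zero_iff]
    have hae' : a = e := by
      rw [hb] at h0
      exact (sub_eq_zero.mp h0).symm
    have hveq : v = e - u := by rw [← hesum]; abel
    rw [hveq, map_sub, ← hae', hfa, sub_self]

end Main

lemma e_not_in_jac {R : Type*} [Ring R] {e : R} [IsArtinianRing R] (he : IsIdempotentElem e) (hne : e ≠ 0) :
    e ∉ Ideal.jacobson (⊥ : Ideal R) := by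
  intro h
  obtain ⟨n, hn⟩ := jac_nil h
  apply hne
  calc e = e ^ (n + 1) := (he.pow_succ_eq n).symm
    _ = e * e ^ n := by rw [pow_succ']
    _ = 0 := by rw [hn, mul_zero]

/-- Over an artinian ring, every principal indecomposable module `eR`
(for `e` a primitive idempotent) is co-Kasch iff the Cartan matrix of `R` is diagonal,
i.e. every simple subfactor (composition factor) of `eR` is isomorphic to its unique
simple quotient `eR/eJ`. -/
theorem stmt14 (R : Type u) [Ring R] [IsArtinianRing R] :
    (∀ e : R, IsPrimitiveIdempotent e → IsCoKasch R (Ideal.span {e})) ↔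
      (∀ e : R, IsPrimitiveIdempotent e →
        ∀ (K : Submodule R (Ideal.span {e}))
          (S : Submodule R ((Ideal.span {e} : Ideal R) ⧸ K)), IsSimpleModule R S →
          ∀ T : Submodule R (Ideal.span {e}), IsCoatom T →
            Nonempty (S ≃ₗ[R] ((Ideal.span {e} : Ideal R) ⧸ T))) := by
  constructor
  · intro hL e hprim K S hS T hT
    obtain ⟨f, hf⟩ := hL e hprim K S hS
    have hker : IsCoatom (LinearMap.ker f) := LinearMap.isCoatom_ker_of_surjective hf
    have hkT : LinearMap.ker f = T := coatom_unique hprim hker hT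
    exact ⟨(LinearMap.quotKerEquivOfSurjective f hf).symm.trans
      (Submodule.quotEquivOfEq _ _ hkT)⟩
  · intro hR e hprim K S hS
    obtain ⟨T, hT, -⟩ := exists_coatom_avoid
      (x := (⟨e, e_mem_span⟩ : (Ideal.span {e} : Ideal R)))
      (e_not_in_jac hprim.1 hprim.2.1)
    obtain ⟨iso⟩ := hR e hprim K S hS T hT
    refine ⟨(iso.symm.toLinearMap).comp T.mkQ, ?_⟩
    exact iso.symm.surjective.comp (Submodule.mkQ_surjective T)
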